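/- For every integer j ≥ 2 and every x ∈ [−1, 1], the function h_j(y) = 1 − Γ(j+y)/(j^y · Γ(j)) satisfies x · h_j′(x) ≤ h_j(x), where h_j′ denotes the derivative of h_j. (This expresses that the difference quotient g_j(x) = h_j(x)/x is nonincreasing on [−1,1].) -/

import Mathlib

/-!
Write `F(y) = Γ(j+y)/(j^y Γ(j))`, so that `h_j = 1 - F` and `F(0) = 1`. Since `log Γ` is convex
(Bohr–Mollerup), `log F` is convex on `(-j, ∞)`, hence so is `F = exp ∘ log F`. The claim
`x h_j'(x) ≤ h_j(x)` is then the tangent-line inequality `F(x) + F'(x) (0 - x) ≤ F(0)`.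
-/

open Real Set

lemma ConvexOn.rexp {E : Type*} [AddCommMonoid E] [Module ℝ E] {s : Set E} {f : E → ℝ}
    (hf : ConvexOn ℝ s f) :
    ConvexOn ℝ s fun x => exp (f x) :=
  ⟨hf.1, fun _ hx _ hy _ _ ha hb hab =>
    (exp_le_exp.2 (hf.2 hx hy ha hb hab)).trans (convexOn_exp.2 trivial trivial ha hb hab)⟩

lemma ConvexOn.add_deriv_mul_sub_le {S : Set ℝ} {f : ℝ → ℝ} {x y : ℝ} (hfc : ConvexOn ℝ S f)
    (hx : x ∈ S) (hy : y ∈ S) (hfd : DifferentiableAt ℝ f x) :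
    f x + deriv f x * (y - x) ≤ f y := by
  rcases lt_trichotomy x y with hxy | rfl | hxy
  · have h := hfc.deriv_le_slope hx hy hxy hfd
    rw [slope_def_field, le_div_iff₀ (sub_pos.2 hxy)] at h
    linarith
  · simp
  · have h := hfc.slope_le_deriv hy hx hxy hfd
    rw [slope_def_field, div_le_iff₀ (sub_pos.2 hxy)] at h
    linarith

lemma convexOn_log_Gamma_add (a : ℝ) : ConvexOn ℝ (Ioi (-a)) fun y => log (Gamma (a + y)) := by
  have h := convexOn_log_Gamma.translate_right a
  rwa [show (fun z => a + z) ⁻¹' Ioi 0 = Ioi (-a) by ext; simp [neg_lt_iff_pos_add']] at h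

lemma convexOn_Gamma_add_div_rpow_mul_Gamma {a : ℝ} (ha : 0 < a) :
    ConvexOn ℝ (Ioi (-a)) fun y => Gamma (a + y) / (a ^ y * Gamma a) := by
  have hlin : ConvexOn ℝ (Ioi (-a)) fun y => -log a * y - log (Gamma a) :=
    ((LinearMap.convexOn ((-log a) • LinearMap.id) (convex_Ioi _)).add_const
      (-log (Gamma a))).congr fun y _ => by simp [sub_eq_add_neg]
  refine ((convexOn_log_Gamma_add a).add hlin).rexp.congr fun y hy => ?_
  have hΓ : 0 < Gamma (a + y) := Gamma_pos_of_pos (neg_lt_iff_pos_add'.1 hy)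
  simp only [Pi.add_apply]
  rw [← add_sub_assoc, exp_sub, exp_add, exp_log hΓ, exp_log (Gamma_pos_of_pos ha),
    rpow_def_of_pos ha, neg_mul, exp_neg]
  field_simp

lemma differentiableAt_Gamma_add_div_rpow_mul_Gamma {a y : ℝ} (ha : 0 < a) (hy : -a < y) :
    DifferentiableAt ℝ (fun y => Gamma (a + y) / (a ^ y * Gamma a)) y := by
  have hΓ : DifferentiableAt ℝ Gamma (a + y) := differentiableAt_Gamma fun m h => by
    have : (0 : ℝ) ≤ m := m.cast_nonneg
    linarith
  refine (hΓ.comp y (differentiableAt_id.const_add a)).div ?_ ?_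
  · exact (hasStrictDerivAt_const_rpow ha y).hasDerivAt.differentiableAt.mul_const _
  · exact (mul_pos (rpow_pos_of_pos ha y) (Gamma_pos_of_pos ha)).ne'

/-- For every integer `j ≥ 2` and `x ∈ [-1,1]`, the function
`h_j(y) = 1 - Γ(j+y)/(j^y Γ(j))` satisfies `x · h_j'(x) ≤ h_j(x)`, i.e. the difference
quotient `g_j(x) = h_j(x)/x` is nonincreasing on `[-1,1]`. -/
theorem stmt3 (j : ℕ) (hj : 2 ≤ j) (x : ℝ) (hx : x ∈ Set.Icc (-1 : ℝ) 1) :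
    x * deriv (fun y : ℝ => 1 - Real.Gamma ((j : ℝ) + y) / ((j : ℝ) ^ y * Real.Gamma j)) x ≤
      1 - Real.Gamma ((j : ℝ) + x) / ((j : ℝ) ^ x * Real.Gamma j) := by
  have hj0 : (0 : ℝ) < j := by positivity
  have hxj : -(j : ℝ) < x := by
    have : (2 : ℝ) ≤ j := by exact_mod_cast hj
    linarith [hx.1]
  have htangent := (convexOn_Gamma_add_div_rpow_mul_Gamma hj0).add_deriv_mul_sub_le hxj
    (neg_lt_zero.2 hj0) (differentiableAt_Gamma_add_div_rpow_mul_Gamma hj0 hxj)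
  rw [deriv_const_sub]
  simp only [add_zero, rpow_zero, one_mul, div_self (Gamma_pos_of_pos hj0).ne'] at htangent
  linarith
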